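/- Let C be a free semi-theory and Φ_C : C → C̄ its completion functor. Then Φ_C is an embedding of categories: it is the identity on objects and injective on each Hom-set (faithful). -/

import Mathlib

open CategoryTheory Limits Topology Topology.Homotopy

noncomputable section

namespace SemiThPaper

/-! ### Weak homotopy equivalences -/

/-- The map induced by a continuous map on homotopy "groups" (sets for `N = Fin 0`). -/
def HomotopyGroup.map {X Y : Type} [TopologicalSpace X] [TopologicalSpace Y]
    (f : C(X, Y)) (N : Type) (x : X) :
    HomotopyGroup N X x → HomotopyGroup N Y (f x) :=
  Quotient.map
    (fun g => ⟨f.comp g.1, fun y hy => by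
      simp only [ContinuousMap.comp_apply]
      rw [g.2 y hy]⟩)
    (fun g h H => H.elim fun H => ⟨H.compContinuousMap f⟩)

/-- The map induced on path components. -/
def ZerothHomotopy.map {X Y : Type} [TopologicalSpace X] [TopologicalSpace Y]
    (f : C(X, Y)) : ZerothHomotopy X → ZerothHomotopy Y :=
  Quotient.map f (fun _ _ h => h.elim fun γ => ⟨γ.map f.continuous⟩)

/-- A weak homotopy equivalence of topological spaces: a continuous map inducing a
bijection on path components and on all homotopy groups at all basepoints. -/
def IsWeakHomotopyEquiv {X Y : TopCat} (f : X ⟶ Y) : Prop :=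
  Function.Bijective (ZerothHomotopy.map (f.hom : C(X, Y))) ∧
    ∀ (n : ℕ) (x : X), Function.Bijective (HomotopyGroup.map (f.hom : C(X, Y)) (Fin n) x)

/-- A weak equivalence of simplicial sets: a map whose geometric realization is a
weak homotopy equivalence. -/
def WeakEquiv {A B : SSet} (f : A ⟶ B) : Prop :=
  IsWeakHomotopyEquiv (SSet.toTop.map f)


/-! ### Semi-theories -/

/-- The objects `[1], [2], [3], …` of a semi-theory, indexed by positive integers. -/
@[ext]
structure Ob : Type where
  val : ℕ+

instance : Coe ℕ+ Ob := ⟨Ob.mk⟩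

/-- An (unpointed) semi-theory: a category with objects `[1], [2], …`
together with distinguished projection morphisms `p^n_k : [n] ⟶ [1]`, where `p^1_1 = 𝟙 [1]`. -/
structure SemiTheory : Type 1 where
  cat : Category.{0, 0} Ob
  proj : ∀ n : ℕ+, Fin n → @Quiver.Hom Ob cat.toCategoryStruct.toQuiver ⟨n⟩ ⟨1⟩
  proj_one : proj 1 ⟨0, Nat.one_pos⟩ = cat.toCategoryStruct.id ⟨1⟩

/-- The category of diagrams of simplicial sets over (the underlying category of)
a semi-theory. -/
abbrev SemiTheory.Diag (S : SemiTheory) : Type 1 :=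
  @CategoryTheory.Functor Ob S.cat SSet _

/-- The `n`-fold levelwise power of a simplicial set. -/
@[simps]
def finPow (n : ℕ+) (A : SSet) : SSet where
  obj m := Fin n → A.obj m
  map θ := TypeCat.ofHom fun a k => A.map θ (a k)

/-- The canonical comparison map `X[n] ⟶ X[1]^n` of a diagram over a semi-theory,
whose components are induced by the projections. -/
def SemiTheory.projFan (S : SemiTheory) (X : S.Diag) (n : ℕ+) :
    (letI := S.cat; (X.obj ⟨n⟩ ⟶ finPow n (X.obj ⟨1⟩))) :=
  letI := S.cat
  { app := fun m => TypeCat.ofHom fun a k => (X.map (S.proj n k)).app m a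
    naturality := fun m m' θ => by
      refine ConcreteCategory.hom_ext _ _ fun a => ?_
      funext k
      exact NatTrans.naturality_apply (X.map (S.proj n k)) θ a }

/-- A strict algebra over a semi-theory: the comparison maps `X[n] ⟶ X[1]^n` are
isomorphisms for all `n > 1`. -/
def SemiTheory.IsStrictAlgebra (S : SemiTheory) (X : S.Diag) : Prop :=
  ∀ n : ℕ+, 1 < (n : ℕ) → IsIso (S.projFan X n)

/-- A homotopy algebra over a semi-theory: the comparison maps `X[n] ⟶ X[1]^n` are
weak equivalences of simplicial sets for all `n > 1`. -/
def SemiTheory.IsHomotopyAlgebra (S : SemiTheory) (X : S.Diag) : Prop :=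
  ∀ n : ℕ+, 1 < (n : ℕ) → WeakEquiv (S.projFan X n)

/-- A semi-theory is an algebraic theory if composition with the projections induces
bijections `Hom([m],[n]) ≅ Hom([m],[1])^n` for all `m` and all `n > 1`. -/
def SemiTheory.IsAlgebraic (S : SemiTheory) : Prop :=
  letI := S.cat
  ∀ (m n : ℕ+), 1 < (n : ℕ) →
    Function.Bijective (fun (f : (⟨m⟩ : Ob) ⟶ ⟨n⟩) (k : Fin n) => f ≫ S.proj n k)

/-- The comparison map `X[n] ⟶ X[1]^n` for a diagram of simplicial sets over any
category equipped with objects `[n]` and projection morphisms. -/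
def projFanAt {C : Type} [Category.{0} C] (o : ℕ+ → C) (p : ∀ n : ℕ+, Fin n → (o n ⟶ o 1))
    (X : C ⥤ SSet) (n : ℕ+) : X.obj (o n) ⟶ finPow n (X.obj (o 1)) where
  app m := TypeCat.ofHom fun a k => (X.map (p n k)).app m a
  naturality m m' θ := by
    refine ConcreteCategory.hom_ext _ _ fun a => ?_
    funext k
    exact NatTrans.naturality_apply (X.map (p n k)) θ a

/-- Strictness of a diagram with respect to given objects and projections. -/
def IsStrictAt {C : Type} [Category.{0} C] (o : ℕ+ → C)
    (p : ∀ n : ℕ+, Fin n → (o n ⟶ o 1)) (X : C ⥤ SSet) : Prop :=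
  ∀ n : ℕ+, 1 < (n : ℕ) → IsIso (projFanAt o p X n)

/-- The homotopy-algebra condition for a diagram with respect to given objects
and projections. -/
def IsHomotopyAt {C : Type} [Category.{0} C] (o : ℕ+ → C)
    (p : ∀ n : ℕ+, Fin n → (o n ⟶ o 1)) (X : C ⥤ SSet) : Prop :=
  ∀ n : ℕ+, 1 < (n : ℕ) → WeakEquiv (projFanAt o p X n)

/-! ### Free semi-theories -/

/-- Generating data for a free semi-theory: a family of free generators that are
not projections (the projections are added separately as free generators). -/
structure GenData : Type 1 where
  gen : ℕ+ → ℕ+ → Type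

/-- The generating quiver of the free semi-theory on `G`: the generators of `G`
together with projection arrows `p^n_k : [n] → [1]` for `n > 1`
(the projection `p^1_1` is the identity, i.e. the empty path). -/
inductive Arr (G : GenData) : ℕ+ → ℕ+ → Type
  | gen {a b : ℕ+} : G.gen a b → Arr G a b
  | proj {n : ℕ+} (h : 1 < (n : ℕ)) (k : Fin n) : Arr G n 1

/-- The object type of the free semi-theory on `G` (a copy of `Ob`). -/
def FreeOb (G : GenData) : Type := Ob

instance freeQuiver (G : GenData) : Quiver (FreeOb G) :=
  ⟨fun a b => Arr G (Ob.val a) (Ob.val b)⟩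

/-- The free semi-theory on `G`, as a category: the paths category on the
generating quiver. -/
abbrev FreeST (G : GenData) := CategoryTheory.Paths (FreeOb G)

/-- The object `[n]` of the free semi-theory. -/
def FreeST.of (G : GenData) (n : ℕ+) : FreeST G := (⟨n⟩ : Ob)

/-- The generating projection arrow, as an arrow of the generating quiver. -/
def projArr (G : GenData) {n : ℕ+} (h : 1 < (n : ℕ)) (k : Fin n) :
    @Quiver.Hom (FreeOb G) _ (FreeST.of G n) (FreeST.of G 1) := Arr.proj h k

/-- The projection `p^n_k` in the free semi-theory. -/
def projPath (G : GenData) (n : ℕ+) (k : Fin n) : FreeST.of G n ⟶ FreeST.of G 1 :=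
  if h : 1 < (n : ℕ) then (projArr G h k).toPath
  else eqToHom (congrArg (FreeST.of G)
    (PNat.coe_injective (by
      rw [PNat.one_coe]
      exact le_antisymm (not_lt.1 h) n.pos)))

/-- The free semi-theory on `G`, as a semi-theory. -/
def freeSemiTheory (G : GenData) : SemiTheory where
  cat := inferInstanceAs (Category (FreeST G))
  proj n k := projPath G n k
  proj_one := by
    show projPath G 1 ⟨0, Nat.one_pos⟩ = _
    rw [projPath, dif_neg (by norm_num)]
    rfl

/-- The initial semi-theory `P` has no generators besides the projections. -/
def emptyGen : GenData := ⟨fun _ _ => PEmpty⟩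

/-- The underlying category of the initial semi-theory `P`. -/
abbrev PCat := FreeST emptyGen

/-- The initial semi-theory `P`: its only non-identity morphisms are the projections. -/
def PTheory : SemiTheory := freeSemiTheory emptyGen

/-- The action of the unique morphism of semi-theories `P ⟶ C` on generating arrows. -/
def jArr (G : GenData) : ∀ {a b : ℕ+}, Arr emptyGen a b →
    @Quiver.Path (FreeOb G) _ ((⟨a⟩ : Ob) : FreeST G) ((⟨b⟩ : Ob) : FreeST G)
  | _, _, .gen α => α.elim
  | _, _, .proj h k => (projArr G h k).toPath

/-- The unique morphism of semi-theories `P ⟶ C` into a free semi-theory. -/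
def Jfree (G : GenData) : PCat ⥤ FreeST G :=
  Paths.lift
    { obj := fun n => (n : FreeST G)
      map := fun {a b} e => jArr G e }

/-! ### The completion of a free semi-theory -/

/-- Trees representing the morphisms `[n] ⟶ [1]` of the completion `C̄` of a free
semi-theory: either a single edge labelled by a projection `p^n_k`, or a tree whose
lowest edge is labelled by a component `α_i` of a non-projection generator
`α : [m] ⟶ [r]` and which is obtained by grafting `m` smaller trees. -/
inductive CTree (G : GenData) (n : ℕ+) : Type
  | proj (k : Fin n) : CTree G n
  | node {m r : ℕ+} (α : G.gen m r) (i : Fin r) (ts : Fin m → CTree G n) : CTree G n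

/-- Morphisms `[n] ⟶ [m]` in the completion: `m`-tuples of trees. -/
def CompHom (G : GenData) (n m : ℕ+) : Type := Fin m → CTree G n

/-- Grafting: substituting the trees `T k` for the initial edges labelled `p^m_k`. -/
def CTree.graft {G : GenData} {n m : ℕ+} : CTree G m → CompHom G n m → CTree G n
  | .proj k, T => T k
  | .node α i ts, T => .node α i (fun j => (ts j).graft T)

/-- The identity of the completion. -/
def compId (G : GenData) (n : ℕ+) : CompHom G n n := fun k => .proj k

/-- Composition in the completion, by grafting. -/
def compComp {G : GenData} {a b c : ℕ+} (T : CompHom G a b) (S : CompHom G b c) :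
    CompHom G a c :=
  fun j => (S j).graft T

theorem CTree.graft_id {G : GenData} {m : ℕ+} (t : CTree G m) :
    t.graft (compId G m) = t := by
  induction t with
  | proj k => rfl
  | node α i ts ih =>
      simp only [CTree.graft]
      congr 1
      funext j
      exact ih j

theorem CTree.graft_graft {G : GenData} {a b c : ℕ+} (s : CTree G c)
    (U : CompHom G b c) (T : CompHom G a b) :
    (s.graft U).graft T = s.graft (compComp T U) := by
  induction s with
  | proj k => rfl
  | node α i ts ih =>
      simp only [CTree.graft]
      congr 1
      funext j
      exact ih j

/-- The object type of the completion (a copy of `Ob`). -/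
def CompOb (G : GenData) : Type := Ob

/-- The completion `C̄` of a free semi-theory, as a category. -/
instance compCategory (G : GenData) : Category (CompOb G) where
  Hom n m := CompHom G (Ob.val n) (Ob.val m)
  id n := compId G _
  comp f g := compComp f g
  id_comp f := funext fun j => CTree.graft_id _
  comp_id f := rfl
  assoc f g h := funext fun j => (CTree.graft_graft _ _ _).symm

/-- The object `[n]` of the completion. -/
def CompOb.of (G : GenData) (n : ℕ+) : CompOb G := (⟨n⟩ : Ob)

/-- The projection `p̂^n_k` of the completion: a single edge labelled `p^n_k`. -/
def compProj (G : GenData) (n : ℕ+) (k : Fin n) : CompOb.of G n ⟶ CompOb.of G 1 :=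
  fun _ => .proj k

/-- The completion, as a semi-theory. -/
def compSemiTheory (G : GenData) : SemiTheory where
  cat := inferInstanceAs (Category (CompOb G))
  proj n k := compProj G n k
  proj_one := by
    funext i
    have h0 : i = ⟨0, Nat.one_pos⟩ := Fin.ext (Nat.lt_one_iff.mp i.isLt)
    rw [h0]
    rfl

/-- The completion functor `Φ` on generating arrows. -/
def phiArr (G : GenData) : ∀ {a b : ℕ+}, Arr G a b → CompHom G a b
  | _, _, .gen α => fun i => .node α i (fun k => .proj k)
  | _, _, .proj _ k => fun _ => .proj k

/-- The completion functor `Φ_C : C ⟶ C̄` of a free semi-theory. -/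
def phi (G : GenData) : FreeST G ⥤ CompOb G :=
  Paths.lift
    { obj := fun n => (n : CompOb G)
      map := fun {a b} e => phiArr G e }

/-! ### Discrete simplicial sets, products, mapping complexes -/

/-- The discrete simplicial set on a type. -/
@[simps]
def disc (A : Type) : SSet where
  obj _ := A
  map _ := TypeCat.ofHom id

/-- The map of discrete simplicial sets induced by a function. -/
@[simps]
def disc.map {A B : Type} (f : A → B) : disc A ⟶ disc B where
  app _ := TypeCat.ofHom f

/-- The diagram of (discrete) simplicial sets corepresented by the object `[n]`
of a semi-theory. -/
def SemiTheory.corep (S : SemiTheory) (n : ℕ+) : S.Diag :=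
  letI := S.cat
  { obj := fun m => disc ((⟨n⟩ : Ob) ⟶ m)
    map := fun f => disc.map (fun g => g ≫ f)
    map_id := fun m => by
      apply NatTrans.ext
      funext x
      refine ConcreteCategory.hom_ext _ _ fun g => ?_
      show g ≫ 𝟙 m = g
      exact Category.comp_id _
    map_comp := fun f f' => by
      apply NatTrans.ext
      funext x
      refine ConcreteCategory.hom_ext _ _ fun g => ?_
      show g ≫ (_ ≫ _) = _
      exact (Category.assoc _ _ _).symm }

/-- Levelwise product of two simplicial sets. -/
@[simps]
def mulC (A K : SSet) : SSet where
  obj m := A.obj m × K.obj m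
  map θ := TypeCat.ofHom fun p => (A.map θ p.1, K.map θ p.2)
  map_id m := by refine ConcreteCategory.hom_ext _ _ fun p => ?_; simp
  map_comp f g := by refine ConcreteCategory.hom_ext _ _ fun p => ?_; simp

/-- `f × id` on levelwise products. -/
@[simps]
def mulC.mapLeft {A B : SSet} (f : A ⟶ B) (K : SSet) : mulC A K ⟶ mulC B K where
  app m := TypeCat.ofHom fun p => (f.app m p.1, p.2)
  naturality m m' θ := by
    refine ConcreteCategory.hom_ext _ _ fun p => ?_
    simp only [mulC_obj, mulC_map, types_comp_apply]
    exact Prod.ext (by exact NatTrans.naturality_apply f θ p.1) rfl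

/-- `id × g` on levelwise products. -/
@[simps]
def mulC.mapRight (A : SSet) {K L : SSet} (g : K ⟶ L) : mulC A K ⟶ mulC A L where
  app m := TypeCat.ofHom fun p => (p.1, g.app m p.2)
  naturality m m' θ := by
    refine ConcreteCategory.hom_ext _ _ fun p => ?_
    simp only [mulC_obj, mulC_map, types_comp_apply]
    exact Prod.ext rfl (by exact NatTrans.naturality_apply g θ p.2)

theorem mulC.mapRight_id (A K : SSet) : mulC.mapRight A (𝟙 K) = 𝟙 (mulC A K) := by
  apply NatTrans.ext; funext x; refine ConcreteCategory.hom_ext _ _ fun p => ?_; rfl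

theorem mulC.mapRight_comp (A : SSet) {K L M : SSet} (g : K ⟶ L) (h : L ⟶ M) :
    mulC.mapRight A (g ≫ h) = mulC.mapRight A g ≫ mulC.mapRight A h := by
  apply NatTrans.ext; funext x; refine ConcreteCategory.hom_ext _ _ fun p => ?_; rfl

/-- Naturality, in applied form. -/
theorem natApply {C : Type} [Category C] {X Y : C ⥤ SSet} (f : X ⟶ Y)
    {c c' : C} (φ : c ⟶ c') (x : SimplexCategoryᵒᵖ) (a : (X.obj c).obj x) :
    (f.app c').app x ((X.map φ).app x a) = (Y.map φ).app x ((f.app c).app x a) :=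
  ConcreteCategory.congr_hom (NatTrans.congr_app (f.naturality φ) x) a

/-- The objectwise product of a diagram of simplicial sets with a constant
simplicial set. -/
@[simps]
def prodConst {C : Type} [Category C] (X : C ⥤ SSet) (K : SSet) : C ⥤ SSet where
  obj c := mulC (X.obj c) K
  map f := mulC.mapLeft (X.map f) K
  map_id c := by
    apply NatTrans.ext; funext x; refine ConcreteCategory.hom_ext _ _ fun p => ?_
    show ((X.map (𝟙 c)).app x p.1, p.2) = p
    rw [X.map_id]
    rfl
  map_comp f g := by
    apply NatTrans.ext; funext x; refine ConcreteCategory.hom_ext _ _ fun p => ?_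
    show ((X.map (f ≫ g)).app x p.1, p.2) = _
    rw [X.map_comp]
    rfl

/-- Functoriality of `prodConst` in the diagram variable. -/
@[simps]
def prodConst.mapX {C : Type} [Category C] {X X' : C ⥤ SSet} (f : X ⟶ X') (K : SSet) :
    prodConst X K ⟶ prodConst X' K where
  app c := mulC.mapLeft (f.app c) K
  naturality c c' φ := by
    apply NatTrans.ext; funext x; refine ConcreteCategory.hom_ext _ _ fun p => ?_
    simp only [prodConst_obj, prodConst_map, NatTrans.comp_app, mulC.mapLeft_app,
      types_comp_apply]
    exact Prod.ext (natApply f φ x p.1) rfl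

/-- Functoriality of `prodConst` in the constant variable. -/
@[simps]
def prodConst.mapK {C : Type} [Category C] (X : C ⥤ SSet) {K L : SSet} (g : K ⟶ L) :
    prodConst X K ⟶ prodConst X L where
  app c := mulC.mapRight (X.obj c) g
  naturality c c' φ := by
    apply NatTrans.ext; funext x; refine ConcreteCategory.hom_ext _ _ fun p => ?_
    rfl

theorem prodConst.mapK_id {C : Type} [Category C] (X : C ⥤ SSet) (K : SSet) :
    prodConst.mapK X (𝟙 K) = 𝟙 (prodConst X K) := by
  apply NatTrans.ext; funext c
  exact mulC.mapRight_id _ _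

theorem prodConst.mapK_comp {C : Type} [Category C] (X : C ⥤ SSet) {K L M : SSet}
    (g : K ⟶ L) (h : L ⟶ M) :
    prodConst.mapK X (g ≫ h) = prodConst.mapK X g ≫ prodConst.mapK X h := by
  apply NatTrans.ext; funext c
  exact mulC.mapRight_comp _ _ _

/-- The standard simplex `Δ[k]`, for `k : SimplexCategoryᵒᵖ`. -/
def stdS (k : SimplexCategoryᵒᵖ) : SSet := SSet.stdSimplex.obj k.unop

/-- Functoriality of the standard simplex (contravariantly in `SimplexCategoryᵒᵖ`). -/
def stdMap {k l : SimplexCategoryᵒᵖ} (θ : k ⟶ l) : stdS l ⟶ stdS k :=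
  SSet.stdSimplex.map θ.unop

theorem stdMap_id (k : SimplexCategoryᵒᵖ) : stdMap (𝟙 k) = 𝟙 (stdS k) :=
  SSet.stdSimplex.map_id _

theorem stdMap_comp {k l m : SimplexCategoryᵒᵖ} (θ : k ⟶ l) (η : l ⟶ m) :
    stdMap (θ ≫ η) = stdMap η ≫ stdMap θ :=
  SSet.stdSimplex.map_comp _ _

/-- The simplicial mapping complex of two diagrams of simplicial sets: its
`m`-simplices are the natural transformations `X × Δ[m] ⟶ Y`. -/
def MapCx {C : Type} [Category C] (X Y : C ⥤ SSet) : SSet where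
  obj m := prodConst X (stdS m) ⟶ Y
  map {m m'} θ := TypeCat.ofHom fun t => prodConst.mapK X (stdMap θ) ≫ t
  map_id m := by
    refine ConcreteCategory.hom_ext _ _ fun t => ?_
    simp [stdMap_id, prodConst.mapK_id]
  map_comp θ η := by
    refine ConcreteCategory.hom_ext _ _ fun t => ?_
    simp [stdMap_comp, prodConst.mapK_comp]

/-- Precomposition on mapping complexes. -/
def MapCx.pre {C : Type} [Category C] {X X' : C ⥤ SSet} (f : X' ⟶ X) (Y : C ⥤ SSet) :
    MapCx X Y ⟶ MapCx X' Y where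
  app m := TypeCat.ofHom fun t => prodConst.mapX f (stdS m) ≫ t
  naturality m m' θ := by
    refine ConcreteCategory.hom_ext _ _ fun t => ?_
    rfl

/-- Postcomposition on mapping complexes. -/
def MapCx.post {C : Type} [Category C] (X : C ⥤ SSet) {Y Y' : C ⥤ SSet} (g : Y ⟶ Y') :
    MapCx X Y ⟶ MapCx X Y' where
  app m := TypeCat.ofHom fun t => t ≫ g
  naturality m m' θ := by
    refine ConcreteCategory.hom_ext _ _ fun t => ?_
    rfl

/-- Restriction of mapping complexes along a functor. -/
def MapCx.whisk {C D : Type} [Category C] [Category D] (F : D ⥤ C) (X Y : C ⥤ SSet) :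
    MapCx X Y ⟶ MapCx (F ⋙ X) (F ⋙ Y) where
  app m := TypeCat.ofHom fun t =>
    (show prodConst (F ⋙ X) (stdS m) ⟶ F ⋙ Y from CategoryTheory.Functor.whiskerLeft F t)
  naturality m m' θ := by
    refine ConcreteCategory.hom_ext _ _ fun t => ?_
    rfl

/-- The simplicial mapping complex of two simplicial sets: its `m`-simplices are
the maps `A × Δ[m] ⟶ B`. -/
def sMap (A B : SSet) : SSet where
  obj m := mulC A (stdS m) ⟶ B
  map {m m'} θ := TypeCat.ofHom fun t => mulC.mapRight A (stdMap θ) ≫ t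
  map_id m := by
    refine ConcreteCategory.hom_ext _ _ fun t => ?_
    simp [stdMap_id, mulC.mapRight_id]
  map_comp θ η := by
    refine ConcreteCategory.hom_ext _ _ fun t => ?_
    simp [stdMap_comp, mulC.mapRight_comp]

/-- Precomposition on simplicial mapping complexes. -/
def sMap.pre {A A' : SSet} (f : A' ⟶ A) (B : SSet) : sMap A B ⟶ sMap A' B where
  app m := TypeCat.ofHom fun t => mulC.mapLeft f (stdS m) ≫ t
  naturality m m' θ := by
    refine ConcreteCategory.hom_ext _ _ fun t => ?_
    rfl

/-- Postcomposition on simplicial mapping complexes. -/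
def sMap.post (A : SSet) {B B' : SSet} (g : B ⟶ B') : sMap A B ⟶ sMap A B' where
  app m := TypeCat.ofHom fun t => t ≫ g
  naturality m m' θ := by
    refine ConcreteCategory.hom_ext _ _ fun t => ?_
    rfl


/-!
Every morphism `[a] ⟶ [1]` of the free semi-theory is either a projection `p^a_k` or a
composite `p ≫ α ≫ p^r_i` with `α : [m] ⟶ [r]` a generator, and `Φ` sends these to the
one-edge tree `p^a_k` and to the tree with root edge `α_i` grafted onto the trees `Φ p`.
So the root of `Φ f` recovers the last generator and projection of `f`, and induction on
the tree recovers `p` from its components `p ≫ p^m_j`; these determine `p` because the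
projections of a free category are jointly monic. A morphism `[a] ⟶ [b]` is in turn
determined by its components.
-/

section Faithful

variable {G : GenData}

def genPath {m r : ℕ+} (α : G.gen m r) : FreeST.of G m ⟶ FreeST.of G r :=
  Quiver.Hom.toPath (V := FreeOb G) (Arr.gen α)

theorem projPath_one (k : Fin (1 : ℕ+)) : projPath G 1 k = 𝟙 (FreeST.of G 1) :=
  dif_neg (lt_irrefl 1)

theorem projPath_of_one_lt {n : ℕ+} (h : 1 < (n : ℕ)) (k : Fin n) :
    projPath G n k = (projArr G h k).toPath :=
  dif_pos h

theorem phi_map_projPath (n : ℕ+) (k : Fin n) :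
    (phi G).map (projPath G n k) = compProj G n k := by
  by_cases h : 1 < (n : ℕ)
  · rw [projPath_of_one_lt h]
    rfl
  · obtain rfl : n = 1 := PNat.coe_eq_one_iff.mp (by have := n.pos; omega)
    rw [projPath_one]
    funext j
    rw [Fin.fin_one_eq_zero k, Fin.fin_one_eq_zero j]
    rfl

theorem phi_map_comp_projPath {a b : ℕ+} (f : FreeST.of G a ⟶ FreeST.of G b) (k : Fin b) :
    (phi G).map (f ≫ projPath G b k) = fun _ => (phi G).map f k := by
  rw [Functor.map_comp, phi_map_projPath]
  rfl

theorem phi_map_comp_genPath_comp_projPath {a m r : ℕ+} (p : FreeST.of G a ⟶ FreeST.of G m)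
    (α : G.gen m r) (i : Fin r) :
    (phi G).map (p ≫ genPath α ≫ projPath G r i) = fun _ => .node α i ((phi G).map p) := by
  rw [← Category.assoc, phi_map_comp_projPath]
  rfl

theorem hom_to_one_cases {a : ℕ+} (f : FreeST.of G a ⟶ FreeST.of G 1) :
    (∃ k, f = projPath G a k) ∨
      ∃ (m r : ℕ+) (p : FreeST.of G a ⟶ FreeST.of G m) (α : G.gen m r) (i : Fin r),
        f = p ≫ genPath α ≫ projPath G r i := by
  rcases f with _ | @⟨⟨c⟩, _, p, e⟩
  · exact .inl ⟨0, (projPath_one 0).symm⟩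
  · change Arr G c 1 at e
    rcases e with α | ⟨h, k⟩
    · exact .inr ⟨c, 1, p, α, 0, by rw [projPath_one]; rfl⟩
    · rcases p with _ | @⟨⟨d⟩, _, p, e⟩
      · exact .inl ⟨k, (projPath_of_one_lt h k).symm⟩
      · change Arr G d c at e
        rcases e with α | _
        · exact .inr ⟨d, c, p, α, k, by rw [projPath_of_one_lt h]; rfl⟩
        · exact absurd h (lt_irrefl 1)

theorem eq_projPath_of_phi_map_eq_proj {a : ℕ+} {f : FreeST.of G a ⟶ FreeST.of G 1}
    {k : Fin a} (hf : (phi G).map f = fun _ => .proj k) : f = projPath G a k := by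
  rcases hom_to_one_cases f with ⟨k', rfl⟩ | ⟨m, r, p, α, i, rfl⟩
  · rw [phi_map_projPath] at hf
    cases congrFun hf 0
    rfl
  · rw [phi_map_comp_genPath_comp_projPath] at hf
    cases congrFun hf 0

theorem exists_of_phi_map_eq_node {a m r : ℕ+} {f : FreeST.of G a ⟶ FreeST.of G 1}
    {α : G.gen m r} {i : Fin r} {ts : Fin m → CTree G a}
    (hf : (phi G).map f = fun _ => .node α i ts) :
    ∃ p : FreeST.of G a ⟶ FreeST.of G m,
      f = p ≫ genPath α ≫ projPath G r i ∧ (phi G).map p = ts := by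
  rcases hom_to_one_cases f with ⟨k, rfl⟩ | ⟨m', r', p, α', i', rfl⟩
  · rw [phi_map_projPath] at hf
    cases congrFun hf 0
  · rw [phi_map_comp_genPath_comp_projPath] at hf
    cases congrFun hf 0
    exact ⟨p, rfl, rfl⟩

theorem eq_of_comp_projPath_eq {X : FreeST G} {b : ℕ+} {f g : X ⟶ FreeST.of G b}
    (h : ∀ k, f ≫ projPath G b k = g ≫ projPath G b k) : f = g := by
  by_cases hb : 1 < (b : ℕ)
  · have h0 := h 0
    rw [projPath_of_one_lt hb] at h0
    exact eq_of_heq (Quiver.Path.cons.inj h0).2.1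
  · obtain rfl : b = 1 := PNat.coe_eq_one_iff.mp (by have := b.pos; omega)
    simpa only [projPath_one, Category.comp_id] using h 0

theorem eq_of_phi_map_eq_const {a : ℕ+} (t : CTree G a) :
    ∀ f g : FreeST.of G a ⟶ FreeST.of G 1,
      (phi G).map f = (fun _ => t) → (phi G).map g = (fun _ => t) → f = g := by
  induction t with
  | proj k =>
    intro f g hf hg
    rw [eq_projPath_of_phi_map_eq_proj hf, eq_projPath_of_phi_map_eq_proj hg]
  | node α i ts ih =>
    intro f g hf hg
    obtain ⟨p, rfl, hp⟩ := exists_of_phi_map_eq_node hf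
    obtain ⟨q, rfl, hq⟩ := exists_of_phi_map_eq_node hg
    suffices p = q by rw [this]
    refine eq_of_comp_projPath_eq fun j => ih j _ _ ?_ ?_
    · rw [phi_map_comp_projPath, hp]
    · rw [phi_map_comp_projPath, hq]

theorem phi_map_injective_to_one {a : ℕ+} {f g : FreeST.of G a ⟶ FreeST.of G 1}
    (h : (phi G).map f = (phi G).map g) : f = g := by
  have hf : (phi G).map f = fun _ => (phi G).map f 0 :=
    funext fun j => by rw [Fin.fin_one_eq_zero j]; rfl
  exact eq_of_phi_map_eq_const _ f g hf (h ▸ hf)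

theorem phi_map_injective {a b : ℕ+} {f g : FreeST.of G a ⟶ FreeST.of G b}
    (h : (phi G).map f = (phi G).map g) : f = g :=
  eq_of_comp_projPath_eq fun k =>
    phi_map_injective_to_one (by rw [Functor.map_comp, Functor.map_comp, h])

end Faithful

theorem completion_functor_is_embedding (G : GenData) :
    (∀ X : FreeST G, (phi G).obj X = X) ∧
      (∀ (a b : FreeST G) (f g : a ⟶ b), (phi G).map f = (phi G).map g → f = g) :=
  ⟨fun _ => rfl, fun ⟨_⟩ ⟨_⟩ _ _ => phi_map_injective⟩

end SemiThPaper
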